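/- Let (A[[ν]],⋆) be a formal deformation of A and suppose X = X0 + νX1 + ν²X2 + ⋯ ∈ A[[ν]] is central for ⋆, i.e. X⋆B = B⋆X for all B ∈ A[[ν]]. Then X0 ∈ Z(A); for every b ∈ A, {X0, b}_1 + [X1, b] = 0 (so (X0, X̄1) annihilates the Poisson module A); and for every Y0 ∈ Z(A) and Y1 ∈ A, {X0,Y0}_1 = 0 and {X0,Y0}_2 + {X1,Y0}_1 + {X0,Y1}_1 + [X1,Y1] = 0 (so (X0, X̄1) is a Casimir of the Poisson algebra Π(A)). -/

import Mathlib

/-!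
Centrality of `X = X₀ + νX₁ + ν²X₂ + ⋯` means `X ⋆ b = b ⋆ X` for every constant `b`, and by
`ν`-linearity of `⋆` the coefficient of `νⁿ` in `X ⋆ b` is `∑_{i+k=n} (Xᵢ, b)ₖ`, where
`(a, b)₀ = ab`. Comparing the coefficients of `ν⁰`, `ν¹`, `ν²` on both sides gives the three
assertions; for the last one, centrality of `Y₀` cancels the `ν²` terms `X₂Y₀ - Y₀X₂`.
-/

open PowerSeries

/-- A formal deformation `(A⟦ν⟧, ⋆)` of an associative unital `R`-algebra `A`:
an `R⟦ν⟧`-bilinear, associative, unital (with unit the constant series `1`)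
multiplication `⋆` on the `R⟦ν⟧`-module `A⟦ν⟧`, such that `a ⋆ b ≡ a * b (mod ν·A⟦ν⟧)`
for all `a, b : A` (viewed as constant power series).  The `R⟦ν⟧`-module structure on
`A⟦ν⟧` is given by `c • P = (map (algebraMap R A) c) * P`. -/
structure FormalDeformation (R A : Type*) [CommRing R] [Ring A] [Algebra R A] where
  star : PowerSeries A → PowerSeries A → PowerSeries A
  add_star : ∀ P Q S, star (P + Q) S = star P S + star Q S
  star_add : ∀ P Q S, star P (Q + S) = star P Q + star P S
  smul_star : ∀ (c : PowerSeries R) (P Q : PowerSeries A),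
      star (PowerSeries.map (algebraMap R A) c * P) Q
        = PowerSeries.map (algebraMap R A) c * star P Q
  star_smul : ∀ (c : PowerSeries R) (P Q : PowerSeries A),
      star P (PowerSeries.map (algebraMap R A) c * Q)
        = PowerSeries.map (algebraMap R A) c * star P Q
  star_assoc : ∀ P Q S, star (star P Q) S = star P (star Q S)
  one_star : ∀ P, star 1 P = P
  star_one : ∀ P, star P 1 = P
  star_deform : ∀ a b : A,
      constantCoeff (star (C a) (C b)) = a * b

namespace FormalDeformation

variable {R A : Type*} [CommRing R] [Ring A] [Algebra R A]

/-- `(a,b)ᵢ` : the coefficient of `νⁱ` in `a ⋆ b`, for `a b : A`. -/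
noncomputable def prodCoeff (D : FormalDeformation R A) (i : ℕ) (a b : A) : A :=
  coeff i (D.star (C a) (C b))

/-- `{a,b}ᵢ` : the coefficient of `νⁱ` in `a ⋆ b − b ⋆ a`, for `a b : A`. -/
noncomputable def brkt (D : FormalDeformation R A) (i : ℕ) (a b : A) : A :=
  coeff i (D.star (C a) (C b) - D.star (C b) (C a))

end FormalDeformation

/-- `H_ν = Z(A) + ν·A⟦ν⟧` : the power series whose constant term is central in `A`. -/
def Hnu (A : Type*) [Ring A] : Set (PowerSeries A) :=
  {P | constantCoeff P ∈ Set.center A}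

namespace PowerSeries

variable {A : Type*} [Ring A]

noncomputable def tail (P : PowerSeries A) : PowerSeries A :=
  mk fun n => coeff (n + 1) P

@[simp]
lemma coeff_tail (P : PowerSeries A) (n : ℕ) : coeff n (tail P) = coeff (n + 1) P :=
  coeff_mk _ _

lemma C_add_X_mul_tail (P : PowerSeries A) : C (coeff 0 P) + X * tail P = P := by
  rw [add_comm, coeff_zero_eq_constantCoeff_apply]
  exact (eq_X_mul_shift_add_const P).symm

end PowerSeries

namespace FormalDeformation

variable {R A : Type*} [CommRing R] [Ring A] [Algebra R A] (D : FormalDeformation R A)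

lemma star_X_mul_left (P Q : PowerSeries A) : D.star (X * P) Q = X * D.star P Q := by
  simpa only [map_X] using D.smul_star X P Q

lemma star_X_mul_right (P Q : PowerSeries A) : D.star P (X * Q) = X * D.star P Q := by
  simpa only [map_X] using D.star_smul X P Q

lemma coeff_zero_star (P Q : PowerSeries A) :
    coeff 0 (D.star P Q) = coeff 0 P * coeff 0 Q := by
  rw [← C_add_X_mul_tail P, ← C_add_X_mul_tail Q]
  simp only [coeff_zero_eq_constantCoeff_apply, D.add_star, D.star_add, star_X_mul_left,
    star_X_mul_right, map_add, map_mul, constantCoeff_X, zero_mul, add_zero, constantCoeff_C,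
    D.star_deform]

lemma coeff_succ_star_left (P Q : PowerSeries A) (n : ℕ) :
    coeff (n + 1) (D.star P Q)
      = coeff (n + 1) (D.star (C (coeff 0 P)) Q) + coeff n (D.star (tail P) Q) := by
  conv_lhs => rw [← C_add_X_mul_tail P]
  rw [D.add_star, star_X_mul_left, map_add, coeff_succ_X_mul]

lemma coeff_succ_star_right (P Q : PowerSeries A) (n : ℕ) :
    coeff (n + 1) (D.star P Q)
      = coeff (n + 1) (D.star P (C (coeff 0 Q))) + coeff n (D.star P (tail Q)) := by
  conv_lhs => rw [← C_add_X_mul_tail Q]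
  rw [D.star_add, star_X_mul_right, map_add, coeff_succ_X_mul]

lemma coeff_one_star_C (P : PowerSeries A) (b : A) :
    coeff 1 (D.star P (C b)) = D.prodCoeff 1 (coeff 0 P) b + coeff 1 P * b := by
  rw [coeff_succ_star_left, coeff_zero_star, coeff_tail, coeff_zero_C]
  rfl

lemma coeff_one_C_star (P : PowerSeries A) (b : A) :
    coeff 1 (D.star (C b) P) = D.prodCoeff 1 b (coeff 0 P) + b * coeff 1 P := by
  rw [coeff_succ_star_right, coeff_zero_star, coeff_tail, coeff_zero_C]
  rfl

lemma coeff_two_star_C (P : PowerSeries A) (b : A) :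
    coeff 2 (D.star P (C b))
      = D.prodCoeff 2 (coeff 0 P) b + D.prodCoeff 1 (coeff 1 P) b + coeff 2 P * b := by
  rw [coeff_succ_star_left, coeff_one_star_C, coeff_tail, coeff_tail, add_assoc]
  rfl

lemma coeff_two_C_star (P : PowerSeries A) (b : A) :
    coeff 2 (D.star (C b) P)
      = D.prodCoeff 2 b (coeff 0 P) + D.prodCoeff 1 b (coeff 1 P) + b * coeff 2 P := by
  rw [coeff_succ_star_right, coeff_one_C_star, coeff_tail, coeff_tail, add_assoc]
  rfl

lemma brkt_eq_sub (i : ℕ) (a b : A) : D.brkt i a b = D.prodCoeff i a b - D.prodCoeff i b a :=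
  map_sub (coeff i) _ _

section StarCommuting

variable {P : PowerSeries A} (hP : ∀ b : A, D.star P (C b) = D.star (C b) P)
include hP

lemma coeff_zero_mem_center : coeff 0 P ∈ Set.center A :=
  Semigroup.mem_center_iff.mpr fun b => by
    simpa only [coeff_zero_star, coeff_zero_C] using congrArg (coeff 0) (hP b).symm

lemma brkt_one_add_commutator_eq_zero (b : A) :
    D.brkt 1 (coeff 0 P) b + (coeff 1 P * b - b * coeff 1 P) = 0 := by
  have h := congrArg (coeff 1) (hP b)
  rw [coeff_one_star_C, coeff_one_C_star] at h
  calc _ = (D.prodCoeff 1 (coeff 0 P) b + coeff 1 P * b)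
        - (D.prodCoeff 1 b (coeff 0 P) + b * coeff 1 P) := by rw [brkt_eq_sub]; abel
    _ = 0 := sub_eq_zero.mpr h

lemma brkt_two_add_brkt_one_eq_zero {y : A} (hy : y ∈ Set.center A) :
    D.brkt 2 (coeff 0 P) y + D.brkt 1 (coeff 1 P) y = 0 := by
  have h := congrArg (coeff 2) (hP y)
  rw [coeff_two_star_C, coeff_two_C_star, Semigroup.mem_center_iff.mp hy] at h
  calc _ = (D.prodCoeff 2 (coeff 0 P) y + D.prodCoeff 1 (coeff 1 P) y + y * coeff 2 P)
        - (D.prodCoeff 2 y (coeff 0 P) + D.prodCoeff 1 y (coeff 1 P) + y * coeff 2 P) := by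
          rw [brkt_eq_sub, brkt_eq_sub]; abel
    _ = 0 := sub_eq_zero.mpr h

end StarCommuting

end FormalDeformation

/-- if `Xs = X0 + νX1 + ⋯ ∈ A⟦ν⟧` is central for `⋆`, then `X0 ∈ Z(A)`;
`(X0, X̄1)` annihilates the Poisson module `A` (i.e. `{X0,b}₁ + [X1,b] = 0` for all `b`);
and `(X0, X̄1)` is a Casimir of `Π(A)`: for all `Y0 ∈ Z(A)`, `Y1 ∈ A`, `{X0,Y0}₁ = 0` and
`{X0,Y0}₂ + {X1,Y0}₁ + {X0,Y1}₁ + [X1,Y1] = 0`. -/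
theorem central_element_casimir {R A : Type*} [CommRing R] [Ring A] [Algebra R A]
    (D : FormalDeformation R A) (Xs : PowerSeries A)
    (hXs : ∀ B : PowerSeries A, D.star Xs B = D.star B Xs) :
    coeff 0 Xs ∈ Set.center A ∧
    (∀ b : A, D.brkt 1 (coeff 0 Xs) b + (coeff 1 Xs * b - b * coeff 1 Xs) = 0) ∧
    (∀ Y0 Y1 : A, Y0 ∈ Set.center A →
      D.brkt 1 (coeff 0 Xs) Y0 = 0 ∧
      D.brkt 2 (coeff 0 Xs) Y0 + D.brkt 1 (coeff 1 Xs) Y0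
        + D.brkt 1 (coeff 0 Xs) Y1
        + (coeff 1 Xs * Y1 - Y1 * coeff 1 Xs) = 0) := by
  have hC : ∀ b : A, D.star Xs (C b) = D.star (C b) Xs := fun b => hXs (C b)
  refine ⟨D.coeff_zero_mem_center hC, D.brkt_one_add_commutator_eq_zero hC,
    fun Y0 Y1 hY0 => ⟨?_, ?_⟩⟩
  · simpa only [Semigroup.mem_center_iff.mp hY0, sub_self, add_zero]
      using D.brkt_one_add_commutator_eq_zero hC Y0
  · rw [D.brkt_two_add_brkt_one_eq_zero hC hY0, zero_add]
    exact D.brkt_one_add_commutator_eq_zero hC Y1
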